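/- arXiv:1801.04638 — 6 statements merged into one kernel-verified Lean document; each statement's English description precedes it below -/
import Mathlib

section
/- Let S be a finite semigroup and φ : S → G a surjective semigroup homomorphism onto a group G. Then there exists a subgroup H of S (an 𝓗-class of S that is a group) such that Hφ = G. -/
/-!
Among the subsemigroups `T` of `S` with `φ '' T = G` choose a minimal one (`S` is finite).
For `a ∈ T` the translates `a T` and `T a` are again such subsemigroups, contained in `T`, so
they equal `T`. Hence the equations `a x = b` and `y a = b` are solvable inside `T`, and a
semigroup with two-sided division is a group.
-/

open Pointwise

/-- A subset of a semigroup which is a group under the inherited multiplication. -/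
def IsSubgroupSet {S : Type} [Semigroup S] (K : Set S) : Prop :=
  (∀ a ∈ K, ∀ b ∈ K, a * b ∈ K) ∧
    ∃ e ∈ K, (∀ a ∈ K, e * a = a ∧ a * e = a) ∧ ∀ a ∈ K, ∃ b ∈ K, a * b = e ∧ b * a = e

open Set

section Division

variable {S : Type} [Semigroup S] {K : Set S}

lemma exists_two_sided_identity_of_div
    (hdivL : ∀ a ∈ K, ∀ b ∈ K, ∃ x ∈ K, a * x = b) (hdivR : ∀ a ∈ K, ∀ b ∈ K, ∃ y ∈ K, y * a = b)
    (hK : K.Nonempty) : ∃ e ∈ K, ∀ b ∈ K, e * b = b ∧ b * e = b := by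
  obtain ⟨a, ha⟩ := hK
  obtain ⟨e, he, hae⟩ := hdivL a ha a ha
  obtain ⟨f, hf, hfa⟩ := hdivR a ha a ha
  have he_right : ∀ b ∈ K, b * e = b := fun b hb => by
    obtain ⟨y, -, rfl⟩ := hdivR a ha b hb
    rw [mul_assoc, hae]
  have hf_left : ∀ b ∈ K, f * b = b := fun b hb => by
    obtain ⟨x, -, rfl⟩ := hdivL a ha b hb
    rw [← mul_assoc, hfa]
  have hfe : f = e := by rw [← he_right f hf, hf_left e he]
  exact ⟨e, he, fun b hb => ⟨hfe ▸ hf_left b hb, he_right b hb⟩⟩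

lemma isSubgroupSet_of_div (hmul : K * K ⊆ K)
    (hdivL : ∀ a ∈ K, ∀ b ∈ K, ∃ x ∈ K, a * x = b) (hdivR : ∀ a ∈ K, ∀ b ∈ K, ∃ y ∈ K, y * a = b)
    (hK : K.Nonempty) : IsSubgroupSet K := by
  obtain ⟨e, he, hid⟩ := exists_two_sided_identity_of_div hdivL hdivR hK
  refine ⟨fun a ha b hb => hmul (mul_mem_mul ha hb), e, he, hid, fun b hb => ?_⟩
  obtain ⟨c, hc, hbc⟩ := hdivL b hb e he
  obtain ⟨d, hd, hdb⟩ := hdivR b hb e he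
  have hdc : d = c := calc
    d = d * (b * c) := by rw [hbc, (hid d hd).2]
    _ = c := by rw [← mul_assoc, hdb, (hid c hc).1]
  exact ⟨c, hc, hbc, hdc ▸ hdb⟩

end Division

section Covering

variable {S G : Type} [Semigroup S] [Group G]

def IsCoveringSubsemigroup (φ : S →ₙ* G) (T : Set S) : Prop := T * T ⊆ T ∧ φ '' T = univ

variable {φ : S →ₙ* G} {T : Set S}

lemma image_singleton_mul_eq_univ {U : Set S} (hU : φ '' U = univ) (a : S) :
    φ '' ({a} * U) = univ := by
  rw [image_mul, hU, image_singleton, singleton_mul, image_univ_of_surjective]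
  exact fun g => ⟨(φ a)⁻¹ * g, mul_inv_cancel_left _ _⟩

lemma image_mul_singleton_eq_univ {U : Set S} (hU : φ '' U = univ) (a : S) :
    φ '' (U * {a}) = univ := by
  rw [image_mul, hU, image_singleton, mul_singleton, image_univ_of_surjective]
  exact fun g => ⟨g * (φ a)⁻¹, inv_mul_cancel_right _ _⟩

lemma IsCoveringSubsemigroup.singleton_mul (hT : IsCoveringSubsemigroup φ T) {a : S}
    (ha : a ∈ T) : IsCoveringSubsemigroup φ ({a} * T) := by
  refine ⟨?_, image_singleton_mul_eq_univ hT.2 a⟩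
  calc {a} * T * ({a} * T) = {a} * (T * {a} * T) := by simp only [mul_assoc]
    _ ⊆ {a} * (T * T * T) := by gcongr; exact singleton_subset_iff.2 ha
    _ ⊆ {a} * T := by gcongr; exact (mul_subset_mul_right hT.1).trans hT.1

lemma IsCoveringSubsemigroup.mul_singleton (hT : IsCoveringSubsemigroup φ T) {a : S}
    (ha : a ∈ T) : IsCoveringSubsemigroup φ (T * {a}) := by
  refine ⟨?_, image_mul_singleton_eq_univ hT.2 a⟩
  calc T * {a} * (T * {a}) = T * ({a} * T) * {a} := by simp only [mul_assoc]
    _ ⊆ T * (T * T) * {a} := by gcongr; exact singleton_subset_iff.2 ha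
    _ ⊆ T * {a} := by gcongr; exact (mul_subset_mul_left hT.1).trans hT.1

lemma Minimal.singleton_mul_eq (hT : Minimal (IsCoveringSubsemigroup φ) T) {a : S} (ha : a ∈ T) :
    {a} * T = T :=
  (hT.eq_of_ge (hT.prop.singleton_mul ha)
    ((mul_subset_mul_right (singleton_subset_iff.2 ha)).trans hT.prop.1)).symm

lemma Minimal.mul_singleton_eq (hT : Minimal (IsCoveringSubsemigroup φ) T) {a : S} (ha : a ∈ T) :
    T * {a} = T :=
  (hT.eq_of_ge (hT.prop.mul_singleton ha)
    ((mul_subset_mul_left (singleton_subset_iff.2 ha)).trans hT.prop.1)).symm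

lemma Minimal.isSubgroupSet (hT : Minimal (IsCoveringSubsemigroup φ) T) : IsSubgroupSet T := by
  refine isSubgroupSet_of_div hT.prop.1 (fun a ha b hb => ?_) (fun a ha b hb => ?_) ?_
  · rw [← hT.singleton_mul_eq ha, Set.singleton_mul] at hb
    exact hb
  · rw [← hT.mul_singleton_eq ha, Set.mul_singleton] at hb
    exact hb
  · exact image_nonempty.1 (hT.prop.2 ▸ univ_nonempty)

end Covering

/-- A surjective homomorphism from a finite semigroup onto a group lifts to a subgroup
of the semigroup mapping onto the whole group. -/
theorem lift_group (S G : Type) [Semigroup S] [Finite S] [Group G]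
    (φ : S →ₙ* G) (hφ : Function.Surjective φ) :
    ∃ K : Set S, IsSubgroupSet K ∧ φ '' K = Set.univ := by
  have huniv : IsCoveringSubsemigroup φ univ :=
    ⟨subset_univ _, image_univ_of_surjective hφ⟩
  obtain ⟨T, hT⟩ := exists_minimal_of_wellFoundedLT _ ⟨univ, huniv⟩
  exact ⟨T, hT.isSubgroupSet, hT.prop.2⟩
end

section
/- Let S be a finite semigroup and let 𝒳 be a 𝐕-pointlike subset of the semigroup PL_𝐕(S) of 𝐕-pointlike subsets of S. Then the union ⋃𝒳 is a 𝐕-pointlike subset of S. -/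
open Pointwise

/-- A variety of finite semigroups: a class of finite semigroups closed under finite
direct products, subsemigroups and homomorphic images. -/
structure SemigroupVariety : Type 1 where
  mem : ∀ (S : Type) [Semigroup S] [Finite S], Prop
  closed_prod : ∀ (S T : Type) [Semigroup S] [Finite S] [Semigroup T] [Finite T],
    mem S → mem T → mem (S × T)
  closed_sub : ∀ (S : Type) [Semigroup S] [Finite S] (U : Subsemigroup S), mem S → mem U
  closed_hom : ∀ (S T : Type) [Semigroup S] [Finite S] [Semigroup T] [Finite T] (f : S →ₙ* T),
    Function.Surjective f → mem S → mem T

/-- `X ⊆ S` is pointlike with respect to the class `V` of finite semigroups: every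
relational morphism from `S` to a member of `V` relates all of `X` to a single point. -/
def Pointlike (V : ∀ (T : Type) [Semigroup T] [Finite T], Prop)
    (S : Type) [Semigroup S] [Finite S] (X : Set S) : Prop :=
  ∀ (T : Type) [Semigroup T] [Finite T], V T →
    ∀ φ : S → Set T, (∀ s, (φ s).Nonempty) → (∀ a b, φ a * φ b ⊆ φ (a * b)) →
      ∃ t : T, ∀ x ∈ X, t ∈ φ x

/-- The semigroup of `V`-pointlike subsets of `S`, as a subsemigroup of `2^S`. -/
def PLsub (Vm : ∀ (T : Type) [Semigroup T] [Finite T], Prop)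
    (S : Type) [Semigroup S] [Finite S] : Subsemigroup (Set S) where
  carrier := {X | Pointlike Vm S X}
  mul_mem' := by
    intro X Y hX hY T _ _ hT φ hne hsub
    obtain ⟨t1, ht1⟩ := hX T hT φ hne hsub
    obtain ⟨t2, ht2⟩ := hY T hT φ hne hsub
    refine ⟨t1 * t2, ?_⟩
    rintro x ⟨p, hp, q, hq, rfl⟩
    exact hsub p q (Set.mul_mem_mul (ht1 p hp) (ht2 q hq))

/-!
A relational morphism `φ : S ⇸ T` induces a relational morphism `PL_V(S) ⇸ T`,
`X ↦ ⋂_{x ∈ X} φ x`: its values are nonempty exactly because each `X` is pointlike, and it is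
submultiplicative because `φ` is. A point `t` common to the images of all `X ∈ 𝒳` under it
lies in `φ x` for every `x ∈ ⋃ 𝒳`.
-/

theorem biInter_mul_biInter_subset {S T : Type*} [Mul S] [Mul T] {φ : S → Set T}
    (hφ : ∀ a b, φ a * φ b ⊆ φ (a * b)) (X Y : Set S) :
    (⋂ x ∈ X, φ x) * (⋂ y ∈ Y, φ y) ⊆ ⋂ z ∈ X * Y, φ z := by
  rintro _ ⟨t, ht, u, hu, rfl⟩
  simp only [Set.mem_iInter₂] at ht hu ⊢
  rintro _ ⟨x, hx, y, hy, rfl⟩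
  exact hφ x y (Set.mul_mem_mul (ht x hx) (hu y hy))

theorem Pointlike.biInter_nonempty {V : ∀ (T : Type) [Semigroup T] [Finite T], Prop}
    {S : Type} [Semigroup S] [Finite S] {X : Set S} (hX : Pointlike V S X)
    {T : Type} [Semigroup T] [Finite T] (hT : V T) {φ : S → Set T}
    (hne : ∀ s, (φ s).Nonempty) (hφ : ∀ a b, φ a * φ b ⊆ φ (a * b)) :
    (⋂ x ∈ X, φ x).Nonempty := by
  obtain ⟨t, ht⟩ := hX T hT φ hne hφ
  exact ⟨t, Set.mem_iInter₂.2 ht⟩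

/-- The union of a `V`-pointlike collection of `V`-pointlike subsets of `S` is
`V`-pointlike in `S`. -/
theorem pointlike_union (V : SemigroupVariety) (S : Type) [Semigroup S] [Finite S]
    (𝒳 : Set ↥(PLsub V.mem S)) (h𝒳 : Pointlike V.mem ↥(PLsub V.mem S) 𝒳) :
    Pointlike V.mem S (⋃ X ∈ 𝒳, (X : Set S)) := by
  intro T _ _ hT φ hne hφ
  obtain ⟨t, ht⟩ := h𝒳 T hT (fun X => ⋂ x ∈ (X : Set S), φ x)
    (fun X => X.2.biInter_nonempty hT hne hφ) (fun A B => biInter_mul_biInter_subset hφ A B)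
  refine ⟨t, fun x hx => ?_⟩
  obtain ⟨X, hX, hxX⟩ := Set.mem_iUnion₂.1 hx
  exact Set.mem_iInter₂.1 (ht X hX) x hxX
end

section
/- Let S be a finite semigroup and G ≤ S a subgroup. Then the 𝐇-kernel K_𝐇(G), viewed as a subset of S, is an H̄-pointlike subset of S, where H̄ is the variety of finite semigroups all of whose subgroups lie in 𝐇. -/
/-! The relational morphism restricted to `G` has a graph `R ≤ G × T` projecting onto `G`.
A subsemigroup `U ≤ R` that is minimal among those projecting onto `G` satisfies
`u U = U = U u` for every `u ∈ U`, so `U` is a group. Modulo the fibre of `p : U → T`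
over `p 1` it embeds in `T`, hence lies in `𝐇`; so does its image `G ⧸ π(fibre)`, whence
`K_𝐇(G) ≤ π(fibre)`, and every element of `π(fibre)` is related to the single point `p 1`. -/

open Pointwise

/-- A variety of finite groups: a class of finite groups closed under finite direct
products, subgroups and homomorphic images. -/
structure GroupVariety : Type 1 where
  mem : ∀ (G : Type) [Group G] [Finite G], Prop
  closed_prod : ∀ (G H : Type) [Group G] [Finite G] [Group H] [Finite H],
    mem G → mem H → mem (G × H)
  closed_sub : ∀ (G : Type) [Group G] [Finite G] (K : Subgroup G), mem G → mem K
  closed_hom : ∀ (G H : Type) [Group G] [Finite G] [Group H] [Finite H] (f : G →* H),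
    Function.Surjective f → mem G → mem H

/-- The 𝐇-kernel of a finite group: the smallest normal subgroup whose quotient
belongs to the class `P` of finite groups. -/
def HKer (P : ∀ (G : Type) [Group G] [Finite G], Prop) (G : Type) [Group G] [Finite G] :
    Subgroup G :=
  sInf {N : Subgroup G |
    ∃ h : N.Normal, @P (G ⧸ N) (@QuotientGroup.Quotient.group G _ N h) inferInstance}

/-- The class H̄ of finite semigroups all of whose subgroups lie in the variety `V` of
finite groups. -/
def HbarMem (V : GroupVariety) (T : Type) [Semigroup T] [Finite T] : Prop :=
  ∀ (G : Type) [Group G] [Finite G] (f : G →ₙ* T), Function.Injective f → V.mem G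

open Set

noncomputable abbrev Group.ofExistsMulEq {S : Type*} [Semigroup S] (a₀ : S)
    (hl : ∀ b : S, ∃ x, a₀ * x = b) (hr : ∀ a b : S, ∃ x, x * a = b) : Group S :=
  letI : One S := ⟨(hr a₀ a₀).choose⟩
  letI : Inv S := ⟨fun a => (hr a 1).choose⟩
  Group.ofLeftAxioms mul_assoc
    (fun b => by
      obtain ⟨x, rfl⟩ := hl b
      rw [← mul_assoc]
      exact congrArg (· * x) (hr a₀ a₀).choose_spec)
    (fun a => (hr a 1).choose_spec)

namespace Subsemigroup

variable {M G : Type*} [Semigroup M] [Group G] {f : M →ₙ* G} {U : Subsemigroup M}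

theorem exists_mul_eq_of_minimal_surjOn
    (hU : Minimal (fun W : Subsemigroup M => SurjOn f W univ) U)
    {a b : M} (ha : a ∈ U) (hb : b ∈ U) : ∃ x ∈ U, a * x = b := by
  -- `a * U` is a subsemigroup of `U` that still maps onto the group `G`, so it is `U`.
  let W : Subsemigroup M :=
    { carrier := (a * ·) '' U
      mul_mem' := by
        rintro _ _ ⟨x, hx, rfl⟩ ⟨y, hy, rfl⟩
        exact ⟨x * (a * y), mul_mem hx (mul_mem ha hy), by simp only [mul_assoc]⟩ }
  have hWU : W ≤ U := by
    rintro _ ⟨x, hx, rfl⟩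
    exact mul_mem ha hx
  have hW : SurjOn f W univ := fun g _ => by
    obtain ⟨x, hx, hfx⟩ := hU.prop (mem_univ ((f a)⁻¹ * g))
    exact ⟨a * x, ⟨x, hx, rfl⟩, by rw [map_mul, hfx, mul_inv_cancel_left]⟩
  exact (hU.eq_of_le hW hWU).ge hb

theorem exists_mul_eq_of_minimal_surjOn'
    (hU : Minimal (fun W : Subsemigroup M => SurjOn f W univ) U)
    {a b : M} (ha : a ∈ U) (hb : b ∈ U) : ∃ x ∈ U, x * a = b := by
  let W : Subsemigroup M :=
    { carrier := (· * a) '' U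
      mul_mem' := by
        rintro _ _ ⟨x, hx, rfl⟩ ⟨y, hy, rfl⟩
        exact ⟨x * a * y, mul_mem (mul_mem hx ha) hy, by simp only [mul_assoc]⟩ }
  have hWU : W ≤ U := by
    rintro _ ⟨x, hx, rfl⟩
    exact mul_mem hx ha
  have hW : SurjOn f W univ := fun g _ => by
    obtain ⟨x, hx, hfx⟩ := hU.prop (mem_univ (g * (f a)⁻¹))
    exact ⟨x * a, ⟨x, hx, rfl⟩, by rw [map_mul, hfx, inv_mul_cancel_right]⟩
  exact (hU.eq_of_le hW hWU).ge hb

noncomputable abbrev groupOfMinimalSurjOn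
    (hU : Minimal (fun W : Subsemigroup M => SurjOn f W univ) U) : Group U :=
  let a₀ : U := ⟨_, (hU.prop (mem_univ 1)).choose_spec.1⟩
  Group.ofExistsMulEq a₀
    (fun b => by
      obtain ⟨x, hx, h⟩ := exists_mul_eq_of_minimal_surjOn hU a₀.2 b.2
      exact ⟨⟨x, hx⟩, Subtype.ext h⟩)
    (fun a b => by
      obtain ⟨x, hx, h⟩ := exists_mul_eq_of_minimal_surjOn' hU a.2 b.2
      exact ⟨⟨x, hx⟩, Subtype.ext h⟩)

end Subsemigroup

namespace Con

variable {M N : Type*} [Mul M] [Mul N]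

def kerLiftMulHom (f : M →ₙ* N) : (ker f).Quotient →ₙ* N where
  toFun q := q.liftOn f fun _ _ h => h
  map_mul' := by
    rintro ⟨x⟩ ⟨y⟩
    exact map_mul f x y

theorem kerLiftMulHom_injective (f : M →ₙ* N) : Function.Injective (kerLiftMulHom f) := by
  rintro ⟨x⟩ ⟨y⟩ h
  exact Quotient.sound h

end Con

section HKer

variable (V : GroupVariety) {U G : Type} [Group U] [Group G] [Finite G]

theorem hKer_le_map_ker {Q : Type} [Group Q] [Finite Q] {π : U →* G}
    (hπ : Function.Surjective π) {ρ : U →* Q} (hQ : V.mem Q) :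
    HKer V.mem G ≤ ρ.ker.map π := by
  have hN : (ρ.ker.map π).Normal := Subgroup.Normal.map inferInstance π hπ
  have hrange : V.mem ρ.range := V.closed_sub Q ρ.range hQ
  let ψ : ρ.range →* G ⧸ ρ.ker.map π :=
    (QuotientGroup.map _ _ π (Subgroup.le_comap_map π _)).comp
      (QuotientGroup.quotientKerEquivRange ρ).symm.toMonoidHom
  have hψ : Function.Surjective ψ :=
    (QuotientGroup.map_surjective_of_surjective _ _ π
      (QuotientGroup.mk_surjective.comp hπ) (Subgroup.le_comap_map π _)).comp
      (MulEquiv.surjective _)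
  exact sInf_le ⟨hN, V.closed_hom _ _ ψ hψ hrange⟩

theorem exists_map_eq_and_eq_map_one_of_mem_hKer [Finite U] {T : Type} [Semigroup T] [Finite T]
    (hT : HbarMem V T) {π : U →* G} (hπ : Function.Surjective π) (p : U →ₙ* T) {k : G}
    (hk : k ∈ HKer V.mem G) : ∃ u, π u = k ∧ p u = p 1 := by
  have : Finite (Con.ker p).Quotient := Quotient.finite _
  have hQ : V.mem (Con.ker p).Quotient :=
    hT _ (Con.kerLiftMulHom p) (Con.kerLiftMulHom_injective p)
  obtain ⟨u, hu, rfl⟩ := hKer_le_map_ker V hπ (ρ := (Con.ker p).mk') hQ hk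
  exact ⟨u, rfl, Con.eq _ |>.1 hu⟩

end HKer

def Subsemigroup.relGraph {S T : Type*} [Mul S] [Mul T] (φ : S → Set T)
    (hφ : ∀ a b, φ a * φ b ⊆ φ (a * b)) : Subsemigroup (S × T) where
  carrier := {q | q.2 ∈ φ q.1}
  mul_mem' ha hb := hφ _ _ (Set.mul_mem_mul ha hb)

theorem kernel_pointlike_general (V : GroupVariety) (S : Type) [Semigroup S] [Finite S]
    (G : Type) [Group G] [Finite G] (ι : G →ₙ* S) :
    Pointlike (HbarMem V) S (ι '' (HKer V.mem G : Subgroup G)) := by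
  intro T _ _ hT φ hne hmul
  let R := Subsemigroup.relGraph (φ ∘ ι) fun a b => by
    simpa only [Function.comp, map_mul] using hmul (ι a) (ι b)
  have hR : SurjOn (MulHom.fst G T) R univ := fun g _ =>
    ⟨(g, (hne (ι g)).some), (hne (ι g)).some_mem, rfl⟩
  have : Finite (Subsemigroup (G × T)) := Finite.of_injective _ SetLike.coe_injective
  obtain ⟨U, hUR, hU⟩ := exists_minimal_le_of_wellFoundedLT
    (fun W : Subsemigroup (G × T) => SurjOn (MulHom.fst G T) W univ) R hR
  let := Subsemigroup.groupOfMinimalSurjOn hU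
  let π : U →* G := MonoidHom.mk' (fun u => u.1.1) fun _ _ => rfl
  have hπ : Function.Surjective π := fun g => by
    obtain ⟨u, hu, rfl⟩ := hU.prop (mem_univ g)
    exact ⟨⟨u, hu⟩, rfl⟩
  let p : U →ₙ* T := (MulHom.snd G T).comp (MulMemClass.subtype U)
  refine ⟨p 1, ?_⟩
  rintro _ ⟨k, hk, rfl⟩
  obtain ⟨u, rfl, hpu⟩ := exists_map_eq_and_eq_map_one_of_mem_hKer V hT hπ p hk
  exact hpu ▸ hUR u.2

/-- The 𝐇-kernel of a subgroup of a finite semigroup `S` is H̄-pointlike in `S`. -/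
theorem kernel_pointlike (V : GroupVariety) (S : Type) [Semigroup S] [Finite S]
    (G : Type) [Group G] [Finite G] (ι : G →ₙ* S) (hι : Function.Injective ι) :
    Pointlike (HbarMem V) S (ι '' (HKer V.mem G : Subgroup G)) :=
  kernel_pointlike_general V S G ι
end

section
/- Let L be an 𝓛-class in a finite semigroup S. There exists a subgroup G_L of St_R(L) such that for every 𝓗-class H ⊆ L, the restriction to G_L of the natural homomorphism St_R(L) → Γ_R(H) is surjective. -/
/-!
Every `u ∈ St_R(L)` permutes `L`: `x₀u ∈ L` gives `x₀ = a x₀ u`, and by stability of finite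
monoids some power `u^n` fixes `x₀`, hence all of `L = S¹x₀`. So `St_R(L)`, modulo "acting
identically on `L`", is a group. Among the subsemigroups of `St_R(L)` meeting every class, a
minimal one `K` satisfies `uK = K = Ku` for `u ∈ K` (both are again such subsemigroups), so `K`
is a group. Elements acting identically on `L` act identically on every 𝓗-class `H ⊆ L`.
-/

open Pointwise

/-- Green's preorder `x ≤_𝓛 y`, i.e. `x ∈ S¹y`. -/
def leL {S : Type} [Semigroup S] (x y : S) : Prop := x = y ∨ ∃ a, x = a * y
/-- Green's preorder `x ≤_𝓡 y`, i.e. `x ∈ yS¹`. -/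
def leR {S : Type} [Semigroup S] (x y : S) : Prop := x = y ∨ ∃ a, x = y * a
/-- Green's relation `𝓛`. -/
def eqL {S : Type} [Semigroup S] (x y : S) : Prop := leL x y ∧ leL y x
/-- Green's relation `𝓡`. -/
def eqR {S : Type} [Semigroup S] (x y : S) : Prop := leR x y ∧ leR y x
/-- Green's preorder `≤_𝓗`. -/
def leH {S : Type} [Semigroup S] (x y : S) : Prop := leL x y ∧ leR x y
/-- Green's relation `𝓗`. -/
def eqH {S : Type} [Semigroup S] (x y : S) : Prop := eqL x y ∧ eqR x y
/-- The 𝓗-class of `x`. -/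
def HClass {S : Type} [Semigroup S] (x : S) : Set S := {y | eqH y x}
/-- The 𝓛-class of `x`. -/
def LClass {S : Type} [Semigroup S] (x : S) : Set S := {y | eqL y x}

/-- The right stabilizer of a subset `X ⊆ S`, as a subset of `S¹ = WithOne S`. -/
def stabR {S : Type} [Semigroup S] (X : Set S) : Set (WithOne S) :=
  {u | ∀ x ∈ X, ∃ y ∈ X, (↑x * u : WithOne S) = ↑y}

instance {S : Type*} [Finite S] : Finite (WithOne S) := inferInstanceAs (Finite (Option S))

theorem isSubgroupSet_of_exists_mul_eq {M : Type} [Semigroup M] {K : Set M} (hne : K.Nonempty)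
    (hmul : ∀ a ∈ K, ∀ b ∈ K, a * b ∈ K)
    (hdiv : ∀ u ∈ K, ∀ b ∈ K, (∃ a ∈ K, u * a = b) ∧ ∃ a ∈ K, a * u = b) :
    IsSubgroupSet K := by
  obtain ⟨u, hu⟩ := hne
  obtain ⟨e, he, hue⟩ := (hdiv u hu u hu).1
  obtain ⟨f, hf, hfu⟩ := (hdiv u hu u hu).2
  have mul_e : ∀ a ∈ K, a * e = a := by
    intro a ha
    obtain ⟨b, -, rfl⟩ := (hdiv u hu a ha).2
    rw [mul_assoc, hue]
  have f_mul : ∀ a ∈ K, f * a = a := by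
    intro a ha
    obtain ⟨b, -, rfl⟩ := (hdiv u hu a ha).1
    rw [← mul_assoc, hfu]
  obtain rfl : e = f := (f_mul e he).symm.trans (mul_e f hf)
  refine ⟨hmul, e, he, fun a ha => ⟨f_mul a ha, mul_e a ha⟩, fun a ha => ?_⟩
  obtain ⟨b, hb, hab⟩ := (hdiv a ha e he).1
  obtain ⟨c, hc, hca⟩ := (hdiv a ha e he).2
  have hbc : b = c := calc
    b = c * a * b := by rw [hca, f_mul b hb]
    _ = c := by rw [mul_assoc, hab, mul_e c hc]
  exact ⟨b, hb, hab, hbc ▸ hca⟩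

theorem IsSubgroupSet.image {M N : Type} [Semigroup M] [Semigroup N] (f : M →ₙ* N) {K : Set M}
    (hK : IsSubgroupSet K) : IsSubgroupSet (f '' K) := by
  obtain ⟨hmul, e, he, hid, hinv⟩ := hK
  refine ⟨?_, f e, ⟨e, he, rfl⟩, ?_, ?_⟩
  · rintro _ ⟨a, ha, rfl⟩ _ ⟨b, hb, rfl⟩
    exact ⟨a * b, hmul a ha b hb, map_mul f a b⟩
  · rintro _ ⟨a, ha, rfl⟩
    simp only [← map_mul, (hid a ha).1, (hid a ha).2, and_self]
  · rintro _ ⟨a, ha, rfl⟩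
    obtain ⟨b, hb, hab, hba⟩ := hinv a ha
    exact ⟨f b, ⟨b, hb, rfl⟩, by rw [← map_mul, hab], by rw [← map_mul, hba]⟩

namespace Con

variable {T : Type} [Semigroup T] (c : Con T)

def IsFullSubsemigroup (K : Set T) : Prop :=
  (∀ a ∈ K, ∀ b ∈ K, a * b ∈ K) ∧ ∀ s, ∃ g ∈ K, c s g

variable {c}

theorem IsFullSubsemigroup.image_mul_left {K : Set T} {u : T} (hK : c.IsFullSubsemigroup K)
    (hdiv : ∀ s, ∃ a, c (u * a) s) (hu : u ∈ K) : c.IsFullSubsemigroup ((u * ·) '' K) := by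
  refine ⟨?_, fun s => ?_⟩
  · rintro _ ⟨a, ha, rfl⟩ _ ⟨b, hb, rfl⟩
    exact ⟨a * (u * b), hK.1 a ha _ (hK.1 u hu b hb), by simp only [mul_assoc]⟩
  · obtain ⟨a, hua⟩ := hdiv s
    obtain ⟨g, hg, hag⟩ := hK.2 a
    exact ⟨u * g, ⟨g, hg, rfl⟩, c.trans (c.symm hua) (c.mul (c.refl u) hag)⟩

theorem IsFullSubsemigroup.image_mul_right {K : Set T} {u : T} (hK : c.IsFullSubsemigroup K)
    (hdiv : ∀ s, ∃ a, c (a * u) s) (hu : u ∈ K) : c.IsFullSubsemigroup ((· * u) '' K) := by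
  refine ⟨?_, fun s => ?_⟩
  · rintro _ ⟨a, ha, rfl⟩ _ ⟨b, hb, rfl⟩
    exact ⟨a * u * b, hK.1 _ (hK.1 a ha u hu) b hb, by simp only [mul_assoc]⟩
  · obtain ⟨a, hau⟩ := hdiv s
    obtain ⟨g, hg, hag⟩ := hK.2 a
    exact ⟨g * u, ⟨g, hg, rfl⟩, c.trans (c.symm hau) (c.mul hag (c.refl u))⟩

/-- `hdiv` says that `T ⧸ c` is a group. -/
theorem exists_isSubgroupSet_forall_rel [Finite T] [Nonempty T]
    (hdiv : ∀ u s : T, (∃ a, c (u * a) s) ∧ ∃ a, c (a * u) s) :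
    ∃ K : Set T, IsSubgroupSet K ∧ ∀ s, ∃ g ∈ K, c s g := by
  obtain ⟨K, hmin⟩ := (Set.toFinite {K | c.IsFullSubsemigroup K}).exists_minimal
    ⟨Set.univ, fun _ _ _ _ => trivial, fun s => ⟨s, trivial, c.refl s⟩⟩
  have hK : c.IsFullSubsemigroup K := hmin.prop
  have eq_of_subset {K'} (hK' : c.IsFullSubsemigroup K') (hle : K' ⊆ K) : K' = K :=
    hmin.eq_of_le hK' hle
  refine ⟨K, isSubgroupSet_of_exists_mul_eq ?_ hK.1 fun u hu b hb => ⟨?_, ?_⟩, hK.2⟩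
  · obtain ⟨g, hg, -⟩ := hK.2 (Classical.arbitrary T)
    exact ⟨g, hg⟩
  · have hKuK := eq_of_subset (hK.image_mul_left (hdiv u · |>.1) hu)
      (Set.image_subset_iff.2 fun a ha => hK.1 u hu a ha)
    show b ∈ (u * ·) '' K
    rwa [hKuK]
  · have hKKu := eq_of_subset (hK.image_mul_right (hdiv u · |>.2) hu)
      (Set.image_subset_iff.2 fun a ha => hK.1 a ha u hu)
    show b ∈ (· * u) '' K
    rwa [hKKu]

end Con

theorem exists_mul_pow_eq_self_of_eq_mul_mul {M : Type*} [Monoid M] [Finite M] {x a u : M}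
    (h : x = a * x * u) : ∃ n, 0 < n ∧ x * u ^ n = x := by
  have hpow : ∀ n, x = a ^ n * x * u ^ n := by
    intro n
    induction n with
    | zero => simp
    | succ n ih =>
      nth_rw 1 [h, ih]
      rw [pow_succ', pow_succ]
      simp only [mul_assoc]
  obtain ⟨m, n, hmn, hmn_eq⟩ := Set.finite_univ.exists_lt_map_eq_of_forall_mem
    (f := fun n : ℕ => u ^ n) fun _ => Set.mem_univ _
  refine ⟨n - m, Nat.sub_pos_of_lt hmn, ?_⟩
  calc x * u ^ (n - m) = a ^ m * x * u ^ n := by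
        rw [← Nat.add_sub_cancel' hmn.le, pow_add, ← mul_assoc, ← hpow m, Nat.add_sub_cancel_left]
    _ = x := by rw [← hmn_eq, ← hpow m]

section Green

variable {S : Type} [Semigroup S]

theorem leL.exists_coe_eq_mul {x y : S} (h : leL x y) :
    ∃ a : WithOne S, (x : WithOne S) = a * y := by
  rcases h with rfl | ⟨a, rfl⟩
  · exact ⟨1, (one_mul _).symm⟩
  · exact ⟨a, WithOne.coe_mul a y⟩

theorem leL.trans {x y z : S} (hxy : leL x y) (hyz : leL y z) : leL x z := by
  rcases hxy with rfl | ⟨a, rfl⟩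
  · exact hyz
  · rcases hyz with rfl | ⟨b, rfl⟩
    · exact Or.inr ⟨a, rfl⟩
    · exact Or.inr ⟨a * b, (mul_assoc a b z).symm⟩

theorem eqL.trans {x y z : S} (hxy : eqL x y) (hyz : eqL y z) : eqL x z :=
  ⟨hxy.1.trans hyz.1, hyz.2.trans hxy.2⟩

theorem mem_LClass_self (x : S) : x ∈ LClass x := ⟨Or.inl rfl, Or.inl rfl⟩

def stabRSubmonoid (X : Set S) : Submonoid (WithOne S) where
  carrier := stabR X
  one_mem' x hx := ⟨x, hx, mul_one _⟩
  mul_mem' {u w} hu hw x hx := by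
    obtain ⟨y, hy, hxy⟩ := hu x hx
    obtain ⟨z, hz, hyz⟩ := hw y hy
    exact ⟨z, hz, by rw [← mul_assoc, hxy, hyz]⟩

def stabRCon (X : Set S) : Con (stabRSubmonoid X) where
  r s t := ∀ x ∈ X, (x : WithOne S) * s = x * t
  iseqv := ⟨fun _ _ _ => rfl, fun h x hx => (h x hx).symm,
    fun h₁ h₂ x hx => (h₁ x hx).trans (h₂ x hx)⟩
  mul' {s s' t t'} hs ht x hx := by
    obtain ⟨y, hy, hxy⟩ := s.2 x hx
    simp only [Submonoid.coe_mul, ← mul_assoc, ← hs x hx, hxy, ht y hy]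

theorem exists_pow_forall_mem_LClass_mul_eq [Finite S] {x₀ : S} {u : WithOne S}
    (hu : u ∈ stabR (LClass x₀)) : ∃ n, 0 < n ∧ ∀ y ∈ LClass x₀, (y : WithOne S) * u ^ n = y := by
  obtain ⟨y₁, hy₁, hx₀y₁⟩ := hu x₀ (mem_LClass_self x₀)
  obtain ⟨a, ha⟩ := hy₁.2.exists_coe_eq_mul
  obtain ⟨n, hn, hx₀n⟩ := exists_mul_pow_eq_self_of_eq_mul_mul (x := (x₀ : WithOne S)) (a := a)
    (u := u) (by rw [mul_assoc, hx₀y₁, ha])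
  refine ⟨n, hn, fun y hy => ?_⟩
  obtain ⟨b, hb⟩ := hy.1.exists_coe_eq_mul
  rw [hb, mul_assoc, hx₀n]

theorem stabRCon_LClass_exists_mul_rel [Finite S] (x₀ : S) (u s : stabRSubmonoid (LClass x₀)) :
    (∃ a, stabRCon (LClass x₀) (u * a) s) ∧ ∃ a, stabRCon (LClass x₀) (a * u) s := by
  obtain ⟨n, hn, hun⟩ := exists_pow_forall_mem_LClass_mul_eq u.2
  have hu_pow : (u : WithOne S) * ↑(u ^ (n - 1)) = (u : WithOne S) ^ n ∧
      (↑(u ^ (n - 1)) : WithOne S) * u = (u : WithOne S) ^ n := by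
    simp only [SubmonoidClass.coe_pow, ← pow_succ', ← pow_succ, Nat.sub_add_cancel hn, and_self]
  refine ⟨⟨u ^ (n - 1) * s, fun x hx => ?_⟩, ⟨s * u ^ (n - 1), fun x hx => ?_⟩⟩
  · simp only [Submonoid.coe_mul, ← mul_assoc]
    rw [mul_assoc (x : WithOne S), hu_pow.1, hun x hx]
  · obtain ⟨y, hy, hxy⟩ := s.2 x hx
    simp only [Submonoid.coe_mul, ← mul_assoc]
    rw [hxy, mul_assoc (y : WithOne S), hu_pow.2, hun y hy]

end Green

/-- There is a subgroup `G_L` of `St_R(L)` mapping onto the Schützenberger group of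
every 𝓗-class contained in the 𝓛-class `L = L_{x₀}`. -/
theorem lift_schutzenberger (S : Type) [Semigroup S] [Finite S] (x₀ : S) :
    ∃ G₀ : Set (WithOne S), G₀ ⊆ stabR (LClass x₀) ∧ IsSubgroupSet G₀ ∧
      ∀ h ∈ LClass x₀, ∀ s ∈ stabR (LClass x₀), ∃ g ∈ G₀,
        ∀ x ∈ HClass h, (↑x * s : WithOne S) = ↑x * g := by
  obtain ⟨K, hK, hcover⟩ :=
    (stabRCon (LClass x₀)).exists_isSubgroupSet_forall_rel (stabRCon_LClass_exists_mul_rel x₀)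
  refine ⟨(↑) '' K, Subtype.coe_image_subset _ K, hK.image (stabRSubmonoid _).subtype.toMulHom,
    fun h hh s hs => ?_⟩
  obtain ⟨g, hg, hsg⟩ := hcover ⟨s, hs⟩
  exact ⟨g, ⟨g, hg, rfl⟩, fun x hx => hsg x (hx.1.trans hh)⟩
end

section
/- The infinite wreath product R^∞ of a transformation monoid (X, R) is a monoid of transformations of X* (the free monoid on X), and it is self-similar: for every F ∈ R^∞ and a ∈ X, the shifted transformation F_a, defined by (β·a)F = (βF_a)·(aF) for all β ∈ X*, belongs to R^∞. -/
open Pointwise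

/-- Apply an `R`-definition `d` to a word (words are read right to left, so the head of
the list is the last letter and `d` is applied to the strict suffix). -/
def applyRDef {X R : Type} (act : X → R → X) (d : List X → R) : List X → List X
  | [] => []
  | x :: q => act x (d q) :: applyRDef act d q

/-! Each letter is moved by an element of `R` depending only on the suffix to its right. For a
composite, the letter is moved first by `d q` and then by `e` at the image of the suffix `q`;
fixing a suffix `γ` leaves such a map on the prefix, with definition `fun q => d (q ++ γ)`. -/

section

variable {X R : Type} (act : X → R → X)

theorem applyRDef_one [One R] (hone : ∀ x, act x 1 = x) :
    applyRDef act (fun _ => 1) = id := by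
  funext l
  induction l with
  | nil => rfl
  | cons x q ih => simp [applyRDef, hone, ih]

theorem applyRDef_comp [Mul R] (hmul : ∀ x r r', act x (r * r') = act (act x r) r')
    (d e : List X → R) :
    applyRDef act e ∘ applyRDef act d = applyRDef act (fun q => d q * e (applyRDef act d q)) := by
  funext l
  induction l with
  | nil => rfl
  | cons x q ih => simp [applyRDef, hmul, ← ih]

theorem applyRDef_append (d : List X → R) (β γ : List X) :
    applyRDef act d (β ++ γ) = applyRDef act (fun q => d (q ++ γ)) β ++ applyRDef act d γ := by
  induction β with
  | nil => rfl
  | cons x q ih => simp [applyRDef, ih]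

end

/-- The infinite wreath product `R^∞` of a right transformation monoid `(X, R)` is a
monoid of transformations of `X*`, and it is self-similar. -/
theorem rinf_monoid_selfsimilar (X R : Type) [Monoid R] (act : X → R → X)
    (hone : ∀ x, act x 1 = x) (hmul : ∀ x r r', act x (r * r') = act (act x r) r') :
    (∃ d : List X → R, (id : List X → List X) = applyRDef act d) ∧
    (∀ F G : List X → List X, (∃ d, F = applyRDef act d) → (∃ d, G = applyRDef act d) →
      ∃ d, (fun l => G (F l)) = applyRDef act d) ∧
    (∀ F : List X → List X, (∃ d, F = applyRDef act d) → ∀ a : X,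
      ∃ Fa : List X → List X, (∀ β, F (β ++ [a]) = Fa β ++ F [a]) ∧
        ∃ d, Fa = applyRDef act d) := by
  refine ⟨⟨_, (applyRDef_one act hone).symm⟩, ?_, ?_⟩
  · rintro F G ⟨d, rfl⟩ ⟨e, rfl⟩
    exact ⟨_, applyRDef_comp act hmul d e⟩
  · rintro F ⟨d, rfl⟩ a
    exact ⟨_, fun β => applyRDef_append act d β [a], _, rfl⟩
end

section
/- Let T be a finite semigroup and S a downward-closed subsemigroup of 2^T. Let K be a subgroup of S generated by a subset 𝒳. Then ⋃K ∈ S if and only if ⋃⟨X⟩ ∈ S for every X ∈ 𝒳, where ⟨X⟩ denotes the cyclic subgroup generated by X. -/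
/-!
Let `E` be the identity of `K`. The members `A ∈ S` with `E ⊆ A` and `E * A = A = A * E` are
closed under multiplication, so by finiteness one of them, `P`, is greatest: for any such `A`,
`P = E * P ⊆ A * P` forces `A * P = P` by maximality, whence `A = A * E ⊆ A * P = P`.
Each `⋃⟨X⟩` is such a member, and the members of `K` lying below one of them form a nonempty
multiplicatively closed subset of the finite group `K`, hence a subgroup; it contains `𝒳`,
so it is all of `K`, and `⋃K ⊆ P ∈ S`.
-/

open Pointwise

/-- Positive powers of a subset of a semigroup: `spow X n = X^(n+1)`. -/
def spow {T : Type} [Semigroup T] (X : Set T) : ℕ → Set T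
  | 0 => X
  | n + 1 => spow X n * X

section spow

variable {T : Type} [Semigroup T]

theorem spow_add (X : Set T) (m n : ℕ) : spow X (m + n + 1) = spow X m * spow X n := by
  induction n with
  | zero => rfl
  | succ n ih =>
    show spow X (m + n + 1) * X = spow X m * (spow X n * X)
    rw [ih, mul_assoc]

theorem spow_mem {K : Set (Set T)} (hK : ∀ A ∈ K, ∀ B ∈ K, A * B ∈ K) {X : Set T} (hX : X ∈ K) :
    ∀ n, spow X n ∈ K
  | 0 => hX
  | n + 1 => hK _ (spow_mem hK hX n) _ hX

theorem exists_spow_succ_eq [Finite T] {K : Set (Set T)} (hK : IsSubgroupSet K) {E X : Set T}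
    (hE : E ∈ K) (hEid : ∀ A ∈ K, E * A = A) (hX : X ∈ K) : ∃ n, spow X (n + 1) = E := by
  obtain ⟨hKmul, E', hE', hid', hinv'⟩ := hK
  obtain rfl : E = E' := (hid' E hE).2.symm.trans (hEid E' hE')
  obtain ⟨i, j, hij, hXij⟩ := Finite.exists_ne_map_eq_of_infinite (spow X)
  wlog hlt : i < j generalizing i j
  · exact this j i hij.symm hXij.symm (by omega)
  obtain ⟨d, rfl⟩ : ∃ d, j = i + d + 1 := ⟨j - i - 1, by omega⟩
  obtain ⟨B, -, -, hBX⟩ := hinv' _ (spow_mem hKmul hX i)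
  -- cancel `X^(i+1)` in `X^(i+1) = X^(i+1) * X^(d+1)`
  have hd : spow X d = E :=
    calc spow X d = E * spow X d := (hEid _ (spow_mem hKmul hX d)).symm
      _ = B * (spow X i * spow X d) := by rw [← hBX, mul_assoc]
      _ = E := by rw [← spow_add, ← hXij, hBX]
  exact ⟨d + d, by rw [spow_add, hd, hEid E hE]⟩

theorem IsSubgroupSet.of_subset [Finite T] {K L : Set (Set T)} (hK : IsSubgroupSet K)
    (hLK : L ⊆ K) (hL : L.Nonempty) (hLmul : ∀ A ∈ L, ∀ B ∈ L, A * B ∈ L) :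
    IsSubgroupSet L := by
  obtain ⟨-, E, hE, hid, -⟩ := id hK
  have hpow : ∀ A ∈ L, ∃ n, spow A (n + 1) = E := fun A hA =>
    exists_spow_succ_eq hK hE (fun B hB => (hid B hB).1) (hLK hA)
  obtain ⟨X, hX⟩ := hL
  obtain ⟨n, hn⟩ := hpow X hX
  refine ⟨hLmul, E, hn ▸ spow_mem hLmul hX (n + 1), fun A hA => hid A (hLK hA), fun A hA => ?_⟩
  obtain ⟨m, hm⟩ := hpow A hA
  exact ⟨spow A m, spow_mem hLmul hA m, (spow_add A 0 m).symm.trans (by rw [zero_add, hm]), hm⟩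

end spow

theorem Set.Finite.exists_isGreatest_of_mul_mem {M : Type*} [Semigroup M] [PartialOrder M]
    [MulLeftMono M] [MulRightMono M] {𝒮 : Set M} {e : M} (h𝒮 : 𝒮.Finite) (hne : 𝒮.Nonempty)
    (hmul : ∀ a ∈ 𝒮, ∀ b ∈ 𝒮, a * b ∈ 𝒮) (he : ∀ a ∈ 𝒮, e ≤ a ∧ e * a = a ∧ a * e = a) :
    ∃ p, IsGreatest 𝒮 p := by
  obtain ⟨p, hp, hpmax⟩ := h𝒮.exists_maximal hne
  refine ⟨p, hp, fun a ha => ?_⟩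
  have hpa : p ≤ a * p :=
    calc p = e * p := (he p hp).2.1.symm
      _ ≤ a * p := mul_le_mul_left (he a ha).1 p
  calc a = a * e := (he a ha).2.2.symm
    _ ≤ a * p := mul_le_mul_right (he p hp).1 a
    _ ≤ p := hpmax (hmul a ha p hp) hpa

section unital

variable {T : Type} [Semigroup T]

def unitalMembers (S : Set (Set T)) (E : Set T) : Set (Set T) :=
  {A | A ∈ S ∧ E ⊆ A ∧ E * A = A ∧ A * E = A}

theorem mul_mem_unitalMembers {S : Set (Set T)} {E A B : Set T}
    (hmul : ∀ X ∈ S, ∀ Y ∈ S, X * Y ∈ S) (hEE : E * E = E)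
    (hA : A ∈ unitalMembers S E) (hB : B ∈ unitalMembers S E) : A * B ∈ unitalMembers S E := by
  obtain ⟨hAS, hEA, hEA', -⟩ := hA
  obtain ⟨hBS, hEB, -, hBE⟩ := hB
  refine ⟨hmul A hAS B hBS, ?_, by rw [← mul_assoc, hEA'], by rw [mul_assoc, hBE]⟩
  calc E = E * E := hEE.symm
    _ ⊆ A * B := Set.mul_subset_mul hEA hEB

theorem iUnion_spow_mem_unitalMembers [Finite T] {S K : Set (Set T)} {E X : Set T}
    (hK : IsSubgroupSet K) (hE : E ∈ K) (hid : ∀ A ∈ K, E * A = A ∧ A * E = A) (hX : X ∈ K)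
    (hXS : ⋃ n, spow X n ∈ S) : ⋃ n, spow X n ∈ unitalMembers S E := by
  have hXn (n : ℕ) : spow X n ∈ K := spow_mem hK.1 hX n
  obtain ⟨k, hk⟩ := exists_spow_succ_eq hK hE (fun A hA => (hid A hA).1) hX
  refine ⟨hXS, hk ▸ Set.subset_iUnion _ _, ?_, ?_⟩
  · rw [Set.mul_iUnion]
    exact Set.iUnion_congr fun n => (hid _ (hXn n)).1
  · rw [Set.iUnion_mul]
    exact Set.iUnion_congr fun n => (hid _ (hXn n)).2

end unital

/-- For a downward-closed subsemigroup `S` of `2^T` and a subgroup `K` of `S` generated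
by `𝒳`, the union `⋃K` lies in `S` iff the union of the cyclic subgroup generated by
each `X ∈ 𝒳` lies in `S`. -/
theorem union_subgroup_mem (T : Type) [Semigroup T] [Finite T] (S : Set (Set T))
    (hmul : ∀ X ∈ S, ∀ Y ∈ S, X * Y ∈ S)
    (hdown : ∀ X ∈ S, ∀ Y : Set T, Y ⊆ X → Y ∈ S)
    (K : Set (Set T)) (hKS : K ⊆ S) (hK : IsSubgroupSet K)
    (𝒳 : Set (Set T)) (h𝒳 : 𝒳 ⊆ K)
    (hgen : ∀ K' : Set (Set T), K' ⊆ K → IsSubgroupSet K' → 𝒳 ⊆ K' → K ⊆ K') :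
    ⋃₀ K ∈ S ↔ ∀ X ∈ 𝒳, (⋃ n : ℕ, spow X n) ∈ S := by
  obtain ⟨hKmul, E, hE, hid, -⟩ := id hK
  refine ⟨fun hU X hX => hdown _ hU _ (Set.iUnion_subset fun n =>
    Set.subset_sUnion_of_mem (spow_mem hKmul (h𝒳 hX) n)), fun hcyc => ?_⟩
  have hEE : E * E = E := (hid E hE).1
  have hE𝒮 : E ∈ unitalMembers S E := ⟨hKS hE, subset_rfl, hEE, hEE⟩
  obtain ⟨P, ⟨hPS, -⟩, hP⟩ := (Set.toFinite (unitalMembers S E)).exists_isGreatest_of_mul_mem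
    ⟨E, hE𝒮⟩ (fun A hA B hB => mul_mem_unitalMembers hmul hEE hA hB) fun A hA => hA.2
  let L : Set (Set T) := {Y | Y ∈ K ∧ ∃ A ∈ unitalMembers S E, Y ⊆ A}
  have hLmul : ∀ Y ∈ L, ∀ Z ∈ L, Y * Z ∈ L := by
    rintro Y ⟨hY, A, hA, hYA⟩ Z ⟨hZ, B, hB, hZB⟩
    exact ⟨hKmul Y hY Z hZ, A * B, mul_mem_unitalMembers hmul hEE hA hB,
      Set.mul_subset_mul hYA hZB⟩
  have hKL : K ⊆ L := hgen L (fun Y hY => hY.1)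
    (hK.of_subset (fun Y hY => hY.1) ⟨E, hE, E, hE𝒮, subset_rfl⟩ hLmul)
    fun X hX => ⟨h𝒳 hX, _, iUnion_spow_mem_unitalMembers hK hE hid (h𝒳 hX) (hcyc X hX),
      Set.subset_iUnion (spow X) 0⟩
  refine hdown P hPS _ (Set.sUnion_subset fun Y hY => ?_)
  obtain ⟨-, A, hA, hYA⟩ := hKL hY
  exact hYA.trans (hP hA)
end
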